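/- arXiv:1102.5491 — 2 statements merged into one kernel-verified Lean document; each statement's English description precedes it below -/
import Mathlib

section
/- As t → ∞, H(2H−1) e^{−2θt} ∫_0^t ∫_0^t e^{θs} e^{θr} |s−r|^{2H−2} dr ds converges to HΓ(2H)/θ^{2H}. -/
/-!
Write `a = 2H - 2 > -1`, `G(t) = ∫₀ᵗ u^a e^{-θu} du` and `M(t) = ∫₀ᵗ u^a e^{θu} du`. Substituting
`v = r - s` in the inner integral and splitting at `v = 0` turns it into
`e^{2θs} (G(s) + M(t - s))`; integrating by parts in `s` then gives the closed form
`∫₀ᵗ∫₀ᵗ … = (e^{2θt} G(t) - M(t)) / θ`. As `t → ∞`, `G(t) → Γ(a+1) / θ^{a+1}`, while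
`e^{-2θt} M(t) ≤ t^{a+1} e^{-θt} / (a+1) → 0`; finally `(2H - 1) Γ(2H - 1) = Γ(2H)`.
-/

open MeasureTheory Real Filter Set Topology

lemma intervalIntegrable_abs_rpow {a : ℝ} (ha : -1 < a) (p q : ℝ) :
    IntervalIntegrable (fun u : ℝ => |u| ^ a) volume p q :=
  ((locallyIntegrable_of_norm_le_rpow (C := 1) (α := -a) (μ := volume) (by simp)
    (by simp; linarith) (ae_of_all _ fun x => by simp [abs_rpow_of_nonneg (abs_nonneg x)])
    (continuous_abs.measurable.pow_const a).aestronglyMeasurable).integrableOn_isCompact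
    isCompact_uIcc).intervalIntegrable

lemma intervalIntegrable_abs_rpow_mul_exp {a : ℝ} (ha : -1 < a) (c p q : ℝ) :
    IntervalIntegrable (fun u : ℝ => |u| ^ a * exp (c * u)) volume p q :=
  (intervalIntegrable_abs_rpow ha p q).mul_continuousOn (by fun_prop)

lemma continuousOn_abs_rpow_mul_exp (a c : ℝ) :
    ContinuousOn (fun u : ℝ => |u| ^ a * exp (c * u)) (Ioi 0) := fun x hx => by
  have : ContinuousAt (fun u : ℝ => |u| ^ a) x :=
    (continuousAt_rpow_const _ a (Or.inl (abs_pos.2 (ne_of_gt hx)).ne')).comp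
      continuous_abs.continuousAt
  exact ContinuousAt.continuousWithinAt (by fun_prop)

lemma integral_abs_rpow {a t : ℝ} (ha : -1 < a) (ht : 0 ≤ t) :
    ∫ u in (0:ℝ)..t, |u| ^ a = t ^ (a + 1) / (a + 1) := by
  rw [intervalIntegral.integral_congr fun u hu => by
      rw [abs_of_nonneg (show 0 ≤ u by rw [uIcc_of_le ht] at hu; exact hu.1)],
    integral_rpow (Or.inl ha), zero_rpow (by linarith), sub_zero]

theorem integral_exp_mul_primitive {f : ℝ → ℝ} {c t : ℝ} (hc : c ≠ 0) (ht : 0 ≤ t)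
    (hf : IntervalIntegrable f volume 0 t) (hfc : ContinuousOn f (Ioo 0 t)) :
    ∫ s in (0:ℝ)..t, exp (c * s) * ∫ u in (0:ℝ)..s, f u
      = (exp (c * t) * (∫ u in (0:ℝ)..t, f u) - ∫ u in (0:ℝ)..t, exp (c * u) * f u) / c := by
  have hprim : ∀ x ∈ Ioo (min 0 t) (max 0 t),
      HasDerivWithinAt (fun s => ∫ u in (0:ℝ)..s, f u) (f x) (Ioi x) x := by
    intro x hx
    have hfx := hf.mono_set (uIcc_subset_uIcc_left (Ioo_subset_Icc_self hx))
    rw [min_eq_left ht, max_eq_right ht] at hx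
    exact (intervalIntegral.integral_hasDerivAt_right hfx
      (hfc.stronglyMeasurableAtFilter isOpen_Ioo x hx)
      (hfc.continuousAt (isOpen_Ioo.mem_nhds hx))).hasDerivWithinAt
  have hexp : ∀ x ∈ Ioo (min 0 t) (max 0 t),
      HasDerivWithinAt (fun s => exp (c * s) / c) (exp (c * x)) (Ioi x) x := by
    intro x _
    refine ((((hasDerivAt_id x).const_mul c).exp).div_const c).hasDerivWithinAt.congr_deriv ?_
    field_simp
    simp
  have hparts := intervalIntegral.integral_mul_deriv_eq_deriv_mul_of_hasDeriv_right
    (intervalIntegral.continuousOn_primitive_interval' hf left_mem_uIcc) (by fun_prop) hprim hexp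
    hf ((by fun_prop : Continuous fun s => exp (c * s)).intervalIntegrable _ _)
  simp only [intervalIntegral.integral_same, zero_mul, sub_zero] at hparts
  rw [intervalIntegral.integral_congr fun s _ => mul_comm _ _, hparts]
  simp only [div_eq_mul_inv, ← mul_assoc, intervalIntegral.integral_mul_const,
    mul_comm (exp _) (f _)]
  ring

/-- With `|u|` rather than `u` (whose real power is junk for `u < 0`), the reflection
`u ↦ -u` acts on the integrand without side conditions. -/
noncomputable def absRpowExpIntegral (a c t : ℝ) : ℝ := ∫ u in (0:ℝ)..t, |u| ^ a * exp (c * u)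

section absRpowExpIntegral

variable {a : ℝ}

lemma continuous_absRpowExpIntegral (ha : -1 < a) (c : ℝ) :
    Continuous (absRpowExpIntegral a c) :=
  intervalIntegral.continuous_primitive (intervalIntegrable_abs_rpow_mul_exp ha c) 0

lemma integral_exp_mul_absRpowExpIntegral {b c t : ℝ} (ha : -1 < a) (hb : b ≠ 0) (ht : 0 ≤ t) :
    ∫ s in (0:ℝ)..t, exp (b * s) * absRpowExpIntegral a c s
      = (exp (b * t) * absRpowExpIntegral a c t - absRpowExpIntegral a (b + c) t) / b := by
  simp only [absRpowExpIntegral]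
  rw [integral_exp_mul_primitive hb ht (intervalIntegrable_abs_rpow_mul_exp ha c 0 t)
    ((continuousOn_abs_rpow_mul_exp a c).mono Ioo_subset_Ioi_self)]
  congr 2
  refine intervalIntegral.integral_congr fun u _ => ?_
  simp only [add_mul, exp_add]
  ring

lemma tendsto_absRpowExpIntegral_neg {θ : ℝ} (ha : -1 < a) (hθ : 0 < θ) :
    Tendsto (absRpowExpIntegral a (-θ)) atTop (𝓝 (Gamma (a + 1) / θ ^ (a + 1))) := by
  have hpos : EqOn (fun u : ℝ => |u| ^ a * exp (-θ * u))
      (fun u => u ^ (a + 1 - 1) * exp (-(θ * u))) (Ioi 0) := fun u hu => by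
    simp [abs_of_pos (show (0:ℝ) < u from hu)]
  have hint : IntegrableOn (fun u : ℝ => |u| ^ a * exp (-θ * u)) (Ioi 0) :=
    (integrableOn_rpow_mul_exp_neg_mul_rpow ha one_pos hθ).congr_fun
      (fun u hu => by simp [abs_of_pos (show (0:ℝ) < u from hu)]) measurableSet_Ioi
  have hval : ∫ u in Ioi 0, |u| ^ a * exp (-θ * u) = Gamma (a + 1) / θ ^ (a + 1) := by
    rw [setIntegral_congr_fun measurableSet_Ioi hpos,
      integral_rpow_mul_exp_neg_mul_Ioi (by linarith) hθ, div_rpow zero_le_one hθ.le, one_rpow]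
    ring
  exact hval ▸ intervalIntegral_tendsto_integral_Ioi 0 hint tendsto_id

lemma tendsto_exp_neg_mul_absRpowExpIntegral {c d : ℝ} (ha : -1 < a) (hc : 0 ≤ c)
    (hcd : c < d) :
    Tendsto (fun t => exp (-(d * t)) * absRpowExpIntegral a c t) atTop (𝓝 0) := by
  have hdecay := (tendsto_rpow_mul_exp_neg_mul_atTop_nhds_zero (a + 1) (d - c)
    (sub_pos.2 hcd)).div_const (a + 1)
  rw [zero_div] at hdecay
  refine squeeze_zero' ?_ ?_ hdecay
  · filter_upwards [eventually_ge_atTop 0] with t ht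
    exact mul_nonneg (exp_pos _).le (intervalIntegral.integral_nonneg ht fun u _ => by positivity)
  · filter_upwards [eventually_ge_atTop 0] with t ht
    have hbound : absRpowExpIntegral a c t ≤ exp (c * t) * (t ^ (a + 1) / (a + 1)) := by
      rw [← integral_abs_rpow ha ht, ← intervalIntegral.integral_const_mul]
      refine intervalIntegral.integral_mono_on ht (intervalIntegrable_abs_rpow_mul_exp ha c 0 t)
        ((intervalIntegrable_abs_rpow ha 0 t).const_mul _) fun u hu => ?_
      rw [mul_comm]
      gcongr
      exact hu.2
    calc exp (-(d * t)) * absRpowExpIntegral a c t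
        ≤ exp (-(d * t)) * (exp (c * t) * (t ^ (a + 1) / (a + 1))) := by gcongr
      _ = t ^ (a + 1) * exp (-(d - c) * t) / (a + 1) := by
        rw [neg_mul, sub_mul, neg_sub, sub_eq_neg_add, exp_add]
        ring

end absRpowExpIntegral

section DoubleIntegral

variable {a θ : ℝ}

lemma integral_exp_mul_exp_mul_abs_sub_rpow (ha : -1 < a) (s t : ℝ) :
    ∫ r in (0:ℝ)..t, exp (θ * s) * exp (θ * r) * |s - r| ^ a
      = exp (2 * θ * s) * (absRpowExpIntegral a (-θ) s + absRpowExpIntegral a θ (t - s)) := by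
  set k : ℝ → ℝ := fun v => |v| ^ a * exp (θ * v)
  have hk : ∀ p q, IntervalIntegrable k volume p q := intervalIntegrable_abs_rpow_mul_exp ha θ
  have hneg : ∫ v in -s..0, k v = absRpowExpIntegral a (-θ) s := by
    simpa [k, absRpowExpIntegral] using (intervalIntegral.integral_comp_neg (a := 0) (b := s) k).symm
  calc ∫ r in (0:ℝ)..t, exp (θ * s) * exp (θ * r) * |s - r| ^ a
      = ∫ r in (0:ℝ)..t, exp (2 * θ * s) * k (r - s) := intervalIntegral.integral_congr fun r _ => by
        rw [abs_sub_comm, ← exp_add, show θ * s + θ * r = 2 * θ * s + θ * (r - s) by ring, exp_add]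
        ring
    _ = exp (2 * θ * s) * ((∫ v in -s..0, k v) + ∫ v in (0:ℝ)..t - s, k v) := by
        rw [intervalIntegral.integral_const_mul, intervalIntegral.integral_comp_sub_right, zero_sub,
          intervalIntegral.integral_add_adjacent_intervals (hk _ _) (hk _ _)]
    _ = _ := by rw [hneg]; rfl

lemma integral_integral_exp_mul_exp_mul_abs_sub_rpow {t : ℝ} (ha : -1 < a) (hθ : θ ≠ 0)
    (ht : 0 ≤ t) :
    ∫ s in (0:ℝ)..t, ∫ r in (0:ℝ)..t, exp (θ * s) * exp (θ * r) * |s - r| ^ a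
      = (exp (2 * θ * t) * absRpowExpIntegral a (-θ) t - absRpowExpIntegral a θ t) / θ := by
  have hcont := continuous_absRpowExpIntegral ha
  have hreflect : ∫ s in (0:ℝ)..t, exp (2 * θ * s) * absRpowExpIntegral a θ (t - s)
      = exp (2 * θ * t) * ∫ u in (0:ℝ)..t, exp (-2 * θ * u) * absRpowExpIntegral a θ u := by
    calc ∫ s in (0:ℝ)..t, exp (2 * θ * s) * absRpowExpIntegral a θ (t - s)
        = ∫ u in (0:ℝ)..t, exp (2 * θ * (t - u)) * absRpowExpIntegral a θ u := by
          simpa using intervalIntegral.integral_comp_sub_left (a := 0) (b := t)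
            (fun u => exp (2 * θ * (t - u)) * absRpowExpIntegral a θ u) t
      _ = _ := by
          rw [← intervalIntegral.integral_const_mul]
          refine intervalIntegral.integral_congr fun u _ => ?_
          simp only [← mul_assoc, ← exp_add]
          ring_nf
  simp_rw [integral_exp_mul_exp_mul_abs_sub_rpow ha, mul_add]
  rw [intervalIntegral.integral_add ((by fun_prop : Continuous _).intervalIntegrable _ _)
    ((by fun_prop : Continuous _).intervalIntegrable _ _), hreflect,
    integral_exp_mul_absRpowExpIntegral ha (mul_ne_zero two_ne_zero hθ) ht,
    integral_exp_mul_absRpowExpIntegral ha (by simpa using hθ) ht,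
    show 2 * θ + -θ = θ by ring, show -2 * θ + θ = -θ by ring]
  have hexp : exp (2 * θ * t) * exp (-(2 * θ * t)) = 1 := by
    rw [← exp_add, add_neg_cancel, exp_zero]
  field_simp
  linear_combination (-absRpowExpIntegral a θ t) * hexp

theorem tendsto_exp_mul_integral_integral_exp_mul_exp_mul_abs_sub_rpow (ha : -1 < a)
    (hθ : 0 < θ) :
    Tendsto (fun t => exp (-2 * θ * t) *
        ∫ s in (0:ℝ)..t, ∫ r in (0:ℝ)..t, exp (θ * s) * exp (θ * r) * |s - r| ^ a)
      atTop (𝓝 (Gamma (a + 1) / θ ^ (a + 2))) := by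
  have hlim := ((tendsto_absRpowExpIntegral_neg ha hθ).sub
    (tendsto_exp_neg_mul_absRpowExpIntegral ha hθ.le (by linarith : θ < 2 * θ))).div_const θ
  rw [sub_zero, div_div, ← rpow_add_one hθ.ne', add_assoc, one_add_one_eq_two] at hlim
  refine hlim.congr' ?_
  filter_upwards [eventually_ge_atTop 0] with t ht
  rw [integral_integral_exp_mul_exp_mul_abs_sub_rpow ha hθ.ne' ht,
    show -2 * θ * t = -(2 * θ * t) by ring]
  have hexp : exp (-(2 * θ * t)) * exp (2 * θ * t) = 1 := by
    rw [← exp_add, neg_add_cancel, exp_zero]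
  rw [mul_div_assoc', mul_sub, ← mul_assoc, hexp, one_mul]

end DoubleIntegral

theorem double_integral_exp_tendsto_general
    (H θ : ℝ) (hH1 : 1 / 2 < H) (hθ : 0 < θ) :
    Tendsto (fun t : ℝ =>
        H * (2 * H - 1) * Real.exp (-2 * θ * t) *
          ∫ s in (0:ℝ)..t, ∫ r in (0:ℝ)..t,
            Real.exp (θ * s) * Real.exp (θ * r) * |s - r| ^ (2 * H - 2))
      atTop (nhds (H * Real.Gamma (2 * H) / θ ^ (2 * H))) := by
  have hlim := (tendsto_exp_mul_integral_integral_exp_mul_exp_mul_abs_sub_rpow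
    (a := 2 * H - 2) (by linarith) hθ).const_mul (H * (2 * H - 1))
  have hGamma : Gamma (2 * H) = (2 * H - 1) * Gamma (2 * H - 1) := by
    rw [← Gamma_add_one (by linarith), sub_add_cancel]
  convert hlim using 2
  · ring
  · rw [hGamma, show 2 * H - 2 + 1 = 2 * H - 1 by ring, show 2 * H - 2 + 2 = 2 * H by ring]
    ring

/-- For `1/2 < H < 1` and `θ > 0`, as `t → ∞`,
`H(2H−1) e^{−2θt} ∫_0^t ∫_0^t e^{θs} e^{θr} |s−r|^{2H−2} dr ds → HΓ(2H)/θ^{2H}`. -/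
theorem double_integral_exp_tendsto
    (H θ : ℝ) (hH1 : 1 / 2 < H) (hH2 : H < 1) (hθ : 0 < θ) :
    Tendsto (fun t : ℝ =>
        H * (2 * H - 1) * Real.exp (-2 * θ * t) *
          ∫ s in (0:ℝ)..t, ∫ r in (0:ℝ)..t,
            Real.exp (θ * s) * Real.exp (θ * r) * |s - r| ^ (2 * H - 2))
      atTop (nhds (H * Real.Gamma (2 * H) / θ ^ (2 * H))) :=
  double_integral_exp_tendsto_general H θ hH1 hθ
end

section
/- For every t > 0, (H²(2H−1)²/2) ∫_{[0,t]^4} e^{−θ|v−s|} e^{−θ|u−r|} |v−u|^{2H−2} |s−r|^{2H−2} du dv dr ds ≤ t^{4H}/2; consequently e^{−θt} times the left-hand side tends to 0 as t → ∞. (This is the bound on E[( ∫_0^t δB_s e^{−θs} ∫_0^s δB_r e^{θr} )²] in the second Wiener chaos.) -/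
/-! Since `exp (-θ |x|) ≤ 1`, the quadruple integral is dominated by the square of
`∫₀ᵗ∫₀ᵗ |v - u| ^ (2H - 2) du dv = t ^ (2H) / (H (2H - 1))`, and the prefactor `H²(2H - 1)²/2`
turns that square into exactly `t ^ (4H) / 2`. The limit follows since `t ^ (4H) e^{-θt} → 0`. -/

open MeasureTheory Real Filter Set

theorem intervalIntegral.integral_mono_on_of_nonneg {μ : Measure ℝ} {f g : ℝ → ℝ} {a b : ℝ}
    (hab : a ≤ b) (hf : ∀ x ∈ Icc a b, 0 ≤ f x) (hg : IntervalIntegrable g μ a b)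
    (h : ∀ x ∈ Icc a b, f x ≤ g x) : ∫ x in a..b, f x ∂μ ≤ ∫ x in a..b, g x ∂μ := by
  rw [intervalIntegral.integral_of_le hab, intervalIntegral.integral_of_le hab]
  refine integral_mono_of_nonneg ?_ hg.1 ?_ <;>
    filter_upwards [ae_restrict_mem measurableSet_Ioc] with x hx
  exacts [hf x (Ioc_subset_Icc_self hx), h x (Ioc_subset_Icc_self hx)]

theorem intervalIntegrable_abs_rpow_s17 {p : ℝ} (hp : -1 < p) (c : ℝ) :
    IntervalIntegrable (fun x : ℝ => |x| ^ p) volume 0 c := by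
  wlog hc : 0 ≤ c generalizing c
  · simpa using (this (-c) (by linarith)).comp_sub_left 0
  rw [intervalIntegrable_iff_integrableOn_Ioc_of_le hc]
  refine ((intervalIntegrable_iff_integrableOn_Ioc_of_le hc).1
    (intervalIntegral.intervalIntegrable_rpow' hp)).congr_fun (fun x hx => ?_) measurableSet_Ioc
  rw [abs_of_pos hx.1]

theorem intervalIntegrable_abs_sub_rpow {p : ℝ} (hp : -1 < p) (c a b : ℝ) :
    IntervalIntegrable (fun x : ℝ => |c - x| ^ p) volume a b := by
  simpa using ((intervalIntegrable_abs_rpow_s17 hp (c - a)).symm.trans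
    (intervalIntegrable_abs_rpow_s17 hp (c - b))).comp_sub_left c

theorem integral_abs_sub_rpow {p : ℝ} (hp : -1 < p) {t v : ℝ} (hv : v ∈ Icc 0 t) :
    ∫ u in (0:ℝ)..t, |v - u| ^ p = (v ^ (p + 1) + (t - v) ^ (p + 1)) / (p + 1) := by
  have hp1 : p + 1 ≠ 0 := by linarith
  have left : ∫ u in (0:ℝ)..v, |v - u| ^ p = v ^ (p + 1) / (p + 1) := by
    rw [intervalIntegral.integral_congr (g := fun u => (v - u) ^ p) fun u hu => by
        rw [uIcc_of_le hv.1] at hu; rw [abs_of_nonneg (sub_nonneg.2 hu.2)],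
      intervalIntegral.integral_comp_sub_left (fun x => x ^ p), sub_self, sub_zero,
      integral_rpow (Or.inl hp), zero_rpow hp1, sub_zero]
  have right : ∫ u in v..t, |v - u| ^ p = (t - v) ^ (p + 1) / (p + 1) := by
    rw [intervalIntegral.integral_congr (g := fun u => (u - v) ^ p) fun u hu => by
        rw [uIcc_of_le hv.2] at hu; rw [abs_sub_comm, abs_of_nonneg (sub_nonneg.2 hu.1)],
      intervalIntegral.integral_comp_sub_right (fun x => x ^ p), sub_self,
      integral_rpow (Or.inl hp), zero_rpow hp1, sub_zero]
  rw [← intervalIntegral.integral_add_adjacent_intervals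
    (intervalIntegrable_abs_sub_rpow hp v 0 v) (intervalIntegrable_abs_sub_rpow hp v v t),
    left, right, add_div]

theorem intervalIntegrable_integral_abs_sub_rpow {p : ℝ} (hp : -1 < p) {t : ℝ} (ht : 0 ≤ t) :
    IntervalIntegrable (fun v => ∫ u in (0:ℝ)..t, |v - u| ^ p) volume 0 t := by
  have hcont : ContinuousOn (fun v : ℝ => (v ^ (p + 1) + (t - v) ^ (p + 1)) / (p + 1))
      (uIcc 0 t) :=
    ((continuous_id.rpow_const fun _ => Or.inr (by linarith)).add
      ((continuous_const.sub continuous_id).rpow_const fun _ => Or.inr (by linarith))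
      ).continuousOn.div_const _
  refine hcont.intervalIntegrable.congr fun v hv => ?_
  rw [uIoc_of_le ht] at hv
  exact (integral_abs_sub_rpow hp (Ioc_subset_Icc_self hv)).symm

theorem integral_integral_abs_sub_rpow {p : ℝ} (hp : -1 < p) {t : ℝ} (ht : 0 ≤ t) :
    ∫ v in (0:ℝ)..t, ∫ u in (0:ℝ)..t, |v - u| ^ p = 2 * t ^ (p + 2) / ((p + 1) * (p + 2)) := by
  have hp1 : -1 < p + 1 := by linarith
  rw [intervalIntegral.integral_congr fun v hv => integral_abs_sub_rpow hp (uIcc_of_le ht ▸ hv),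
    intervalIntegral.integral_div, intervalIntegral.integral_add
      (intervalIntegral.intervalIntegrable_rpow' hp1)
      (by simpa using
        (intervalIntegral.intervalIntegrable_rpow' hp1 (a := t) (b := 0)).comp_sub_left t),
    intervalIntegral.integral_comp_sub_left (fun x => x ^ (p + 1)), sub_self, sub_zero,
    integral_rpow (Or.inl hp1), zero_rpow (by linarith), sub_zero]
  rw [show p + 1 + 1 = p + 2 by ring, ← add_div, div_div, mul_comm (p + 2), two_mul]

theorem integral_exp_abs_mul_abs_rpow_nonneg (θ p : ℝ) {t : ℝ} (ht : 0 ≤ t) :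
    0 ≤ ∫ s in (0:ℝ)..t, ∫ r in (0:ℝ)..t, ∫ v in (0:ℝ)..t, ∫ u in (0:ℝ)..t,
        exp (-θ * |v - s|) * exp (-θ * |u - r|) * |v - u| ^ p * |s - r| ^ p := by
  refine intervalIntegral.integral_nonneg ht fun s _ => ?_
  refine intervalIntegral.integral_nonneg ht fun r _ => ?_
  refine intervalIntegral.integral_nonneg ht fun v _ => ?_
  refine intervalIntegral.integral_nonneg ht fun u _ => ?_
  positivity

theorem integral_exp_abs_mul_abs_rpow_le {θ p : ℝ} (hθ : 0 ≤ θ) (hp : -1 < p) {t : ℝ}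
    (ht : 0 ≤ t) :
    ∫ s in (0:ℝ)..t, ∫ r in (0:ℝ)..t, ∫ v in (0:ℝ)..t, ∫ u in (0:ℝ)..t,
        exp (-θ * |v - s|) * exp (-θ * |u - r|) * |v - u| ^ p * |s - r| ^ p ≤
      (∫ v in (0:ℝ)..t, ∫ u in (0:ℝ)..t, |v - u| ^ p) ^ 2 := by
  -- Only the dominating functions need to be integrable, so the measurability of the inner
  -- iterated integrals never comes up.
  set A : ℝ → ℝ := fun v => ∫ u in (0:ℝ)..t, |v - u| ^ p
  set M := ∫ v in (0:ℝ)..t, A v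
  have hA : IntervalIntegrable A volume 0 t := intervalIntegrable_integral_abs_sub_rpow hp ht
  have hK := intervalIntegrable_abs_sub_rpow hp
  have hexp (x : ℝ) : exp (-θ * |x|) ≤ 1 :=
    exp_le_one_iff.2 (by nlinarith [abs_nonneg x])
  have level_u (s r v : ℝ) : ∫ u in (0:ℝ)..t,
      exp (-θ * |v - s|) * exp (-θ * |u - r|) * |v - u| ^ p * |s - r| ^ p ≤ |s - r| ^ p * A v := by
    calc _ ≤ ∫ u in (0:ℝ)..t, |v - u| ^ p * |s - r| ^ p :=
          intervalIntegral.integral_mono_on_of_nonneg ht (fun u _ => by positivity)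
            ((hK v 0 t).mul_const _) fun u _ => by
              have := mul_le_one₀ (hexp (v - s)) (exp_pos _).le (hexp (u - r))
              rw [mul_assoc]
              exact mul_le_of_le_one_left (by positivity) this
      _ = |s - r| ^ p * A v := by rw [intervalIntegral.integral_mul_const, mul_comm]
  have level_v (s r : ℝ) : ∫ v in (0:ℝ)..t, ∫ u in (0:ℝ)..t,
      exp (-θ * |v - s|) * exp (-θ * |u - r|) * |v - u| ^ p * |s - r| ^ p ≤ |s - r| ^ p * M := by
    calc _ ≤ ∫ v in (0:ℝ)..t, |s - r| ^ p * A v :=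
          intervalIntegral.integral_mono_on_of_nonneg ht
            (fun v _ => intervalIntegral.integral_nonneg ht fun u _ => by positivity)
            (hA.const_mul _) fun v _ => level_u s r v
      _ = |s - r| ^ p * M := intervalIntegral.integral_const_mul _ _
  have level_r (s : ℝ) : ∫ r in (0:ℝ)..t, ∫ v in (0:ℝ)..t, ∫ u in (0:ℝ)..t,
      exp (-θ * |v - s|) * exp (-θ * |u - r|) * |v - u| ^ p * |s - r| ^ p ≤ M * A s := by
    calc _ ≤ ∫ r in (0:ℝ)..t, |s - r| ^ p * M :=
          intervalIntegral.integral_mono_on_of_nonneg ht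
            (fun r _ => intervalIntegral.integral_nonneg ht fun v _ =>
              intervalIntegral.integral_nonneg ht fun u _ => by positivity)
            ((hK s 0 t).mul_const _) fun r _ => level_v s r
      _ = M * A s := by rw [intervalIntegral.integral_mul_const, mul_comm]
  calc _ ≤ ∫ s in (0:ℝ)..t, M * A s :=
        intervalIntegral.integral_mono_on_of_nonneg ht
          (fun s _ => intervalIntegral.integral_nonneg ht fun r _ =>
            intervalIntegral.integral_nonneg ht fun v _ =>
              intervalIntegral.integral_nonneg ht fun u _ => by positivity)
          (hA.const_mul _) fun s _ => level_r s
    _ = M ^ 2 := by rw [intervalIntegral.integral_const_mul, sq]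

theorem second_chaos_bound_and_tendsto_general
    (H θ : ℝ) (hH1 : 1 / 2 < H) (hθ : 0 < θ) :
    (∀ t : ℝ, 0 < t →
      (H ^ 2 * (2 * H - 1) ^ 2 / 2) *
          ∫ s in (0:ℝ)..t, ∫ r in (0:ℝ)..t, ∫ v in (0:ℝ)..t, ∫ u in (0:ℝ)..t,
            Real.exp (-θ * |v - s|) * Real.exp (-θ * |u - r|) *
              |v - u| ^ (2 * H - 2) * |s - r| ^ (2 * H - 2) ≤
        t ^ (4 * H) / 2) ∧
    Tendsto (fun t : ℝ =>
        Real.exp (-θ * t) *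
          ((H ^ 2 * (2 * H - 1) ^ 2 / 2) *
            ∫ s in (0:ℝ)..t, ∫ r in (0:ℝ)..t, ∫ v in (0:ℝ)..t, ∫ u in (0:ℝ)..t,
              Real.exp (-θ * |v - s|) * Real.exp (-θ * |u - r|) *
                |v - u| ^ (2 * H - 2) * |s - r| ^ (2 * H - 2)))
      atTop (nhds 0) := by
  have hp : -1 < 2 * H - 2 := by linarith
  have hc : 0 ≤ H ^ 2 * (2 * H - 1) ^ 2 / 2 := by positivity
  have bound (t : ℝ) (ht : 0 < t) : (H ^ 2 * (2 * H - 1) ^ 2 / 2) *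
      ∫ s in (0:ℝ)..t, ∫ r in (0:ℝ)..t, ∫ v in (0:ℝ)..t, ∫ u in (0:ℝ)..t,
        exp (-θ * |v - s|) * exp (-θ * |u - r|) *
          |v - u| ^ (2 * H - 2) * |s - r| ^ (2 * H - 2) ≤ t ^ (4 * H) / 2 := by
    grw [integral_exp_abs_mul_abs_rpow_le hθ.le hp ht.le,
      integral_integral_abs_sub_rpow hp ht.le]
    refine le_of_eq ?_
    rw [show 2 * H - 2 + 1 = 2 * H - 1 by ring, show 2 * H - 2 + 2 = 2 * H by ring,
      show 4 * H = 2 * H + 2 * H by ring, rpow_add ht]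
    have h2H : 2 * H - 1 ≠ 0 := by linarith
    have hH : H ≠ 0 := by linarith
    rw [div_pow, mul_pow, mul_pow, div_mul_div_comm,
      div_eq_div_iff (by positivity) two_ne_zero]
    ring
  have hupper : Tendsto (fun t => t ^ (4 * H) * exp (-θ * t) / 2) atTop (nhds 0) := by
    simpa using (tendsto_rpow_mul_exp_neg_mul_atTop_nhds_zero (4 * H) θ hθ).div_const 2
  refine ⟨bound, tendsto_of_tendsto_of_tendsto_of_le_of_le' tendsto_const_nhds hupper ?_ ?_⟩
  · filter_upwards [eventually_ge_atTop (0:ℝ)] with t ht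
    exact mul_nonneg (exp_pos _).le (mul_nonneg hc (integral_exp_abs_mul_abs_rpow_nonneg θ _ ht))
  · filter_upwards [eventually_gt_atTop (0:ℝ)] with t ht
    linarith [mul_le_mul_of_nonneg_left (bound t ht) (exp_pos (-θ * t)).le]

/-- For `1/2 < H < 1`, `θ > 0`: for every `t > 0`,
`(H²(2H−1)²/2) ∫_{[0,t]^4} e^{−θ|v−s|} e^{−θ|u−r|} |v−u|^{2H−2} |s−r|^{2H−2} du dv dr ds ≤ t^{4H}/2`,
and consequently `e^{−θt}` times the left-hand side tends to `0` as `t → ∞`. -/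
theorem second_chaos_bound_and_tendsto
    (H θ : ℝ) (hH1 : 1 / 2 < H) (hH2 : H < 1) (hθ : 0 < θ) :
    (∀ t : ℝ, 0 < t →
      (H ^ 2 * (2 * H - 1) ^ 2 / 2) *
          ∫ s in (0:ℝ)..t, ∫ r in (0:ℝ)..t, ∫ v in (0:ℝ)..t, ∫ u in (0:ℝ)..t,
            Real.exp (-θ * |v - s|) * Real.exp (-θ * |u - r|) *
              |v - u| ^ (2 * H - 2) * |s - r| ^ (2 * H - 2) ≤
        t ^ (4 * H) / 2) ∧
    Tendsto (fun t : ℝ =>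
        Real.exp (-θ * t) *
          ((H ^ 2 * (2 * H - 1) ^ 2 / 2) *
            ∫ s in (0:ℝ)..t, ∫ r in (0:ℝ)..t, ∫ v in (0:ℝ)..t, ∫ u in (0:ℝ)..t,
              Real.exp (-θ * |v - s|) * Real.exp (-θ * |u - r|) *
                |v - u| ^ (2 * H - 2) * |s - r| ^ (2 * H - 2)))
      atTop (nhds 0) :=
  second_chaos_bound_and_tendsto_general H θ hH1 hθ
end
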